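/- arXiv:2210.16885 — 4 statements merged into one kernel-verified Lean document; each statement's English description precedes it below -/
import Mathlib

section
/- For a quasi-choice correspondence c over a finite set X, the following are equivalent: (i) c satisfies Axiom α; (ii) c is s-majoritarian for some real share s ∈ [0,1); (iii) c is s-majoritarian for every real share s ∈ [0,1). -/
/-- `r` rationalizes the quasi-choice `c`: `c A` is the set of `r`-maximal elements of `A`. -/
def Rationalizes {X : Type*} (r : X → X → Prop) (c : Set X → Set X) : Prop :=
  ∀ A : Set X, c A = {a ∈ A | ∀ b ∈ A, ¬ r b a}

/-- `c` is freely rationalizable (a ballot): rationalized by an arbitrary binary relation. -/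
def FreelyRat {X : Type*} (c : Set X → Set X) : Prop :=
  ∃ r : X → X → Prop, Rationalizes r c

/-- `c` is asymmetrically rationalizable. -/
def AsymRat {X : Type*} (c : Set X → Set X) : Prop :=
  ∃ r : X → X → Prop, (∀ a b, r a b → ¬ r b a) ∧ Rationalizes r c

/-- Contractiveness: `c` is a quasi-choice. -/
def IsQuasiChoice {X : Type*} (c : Set X → Set X) : Prop :=
  ∀ A : Set X, c A ⊆ A

/-- Axiom α (Chernoff, Standard Contraction Consistency). -/
def AxiomAlpha {X : Type*} (c : Set X → Set X) : Prop :=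
  ∀ ⦃A B : Set X⦄ ⦃x : X⦄, A ⊆ B → x ∈ A → x ∈ c B → x ∈ c A

/-- Axiom γ (Standard Expansion Consistency). -/
def AxiomGamma {X : Type*} (c : Set X → Set X) : Prop :=
  ∀ ⦃A B : Set X⦄ ⦃x : X⦄, x ∈ c A → x ∈ c B → x ∈ c (A ∪ B)

/-- A liberal representation of `c` by the family of ballots `v`. -/
def IsLiberalRep {X : Type*} (c : Set X → Set X) {k : ℕ} (v : Fin k → Set X → Set X) : Prop :=
  (∀ i, FreelyRat (v i)) ∧
    ∀ A : Set X, ∀ x ∈ A, (x ∈ c A ↔ ∃ i, x ∈ v i A)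

/-- A democratic representation of `c` by the family of ballots `v`:
an item is chosen iff more than half of the ballots endorse it. -/
def IsDemRep {X : Type*} (c : Set X → Set X) {k : ℕ} (v : Fin k → Set X → Set X) : Prop :=
  (∀ i, FreelyRat (v i)) ∧
    ∀ A : Set X, ∀ x ∈ A, (x ∈ c A ↔ 2 * Nat.card {i : Fin k // x ∈ v i A} > k)

/-- The liberal number of `c`: the minimum size of a liberal representation (⊤ if none). -/
noncomputable def lib {X : Type*} (c : Set X → Set X) : ℕ∞ :=
  sInf {n : ℕ∞ | ∃ (k : ℕ) (v : Fin k → Set X → Set X), 0 < k ∧ IsLiberalRep c v ∧ n = (k : ℕ∞)}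

/-- The democratic number of `c`: the minimum size of a democratic representation (⊤ if none). -/
noncomputable def dem {X : Type*} (c : Set X → Set X) : ℕ∞ :=
  sInf {n : ℕ∞ | ∃ (k : ℕ) (v : Fin k → Set X → Set X), 0 < k ∧ IsDemRep c v ∧ n = (k : ℕ∞)}

/-- `c` is `s`-majoritarian: some finite family of ballots selects exactly the items
endorsed by a share of ballots strictly larger than `s`. -/
def Majoritarian {X : Type*} (s : ℝ) (c : Set X → Set X) : Prop :=
  ∃ (k : ℕ) (v : Fin k → Set X → Set X), 0 < k ∧ (∀ i, FreelyRat (v i)) ∧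
    ∀ A : Set X, ∀ x ∈ A,
      (x ∈ c A ↔ (Nat.card {i : Fin k // x ∈ v i A} : ℝ) / (k : ℝ) > s)

/-!
A ballot satisfies Axiom α, so when the menu shrinks from `B` to `A ∋ x` the number of ballots
endorsing `x` can only grow; any threshold rule on that number therefore inherits α.

Conversely, given α and a share `s < 1`, use one ballot for every pair `(B, y)` with `y ∈ c B`,
endorsing `y` exactly on the submenus of `B` that contain it, together with `d` unanimous ballots
and enough empty ones that the total `k` satisfies `⌊s k⌋ = d`. An item `x ∈ A` is then endorsed by
the `d` unanimous ballots plus one for each `B ⊇ A` with `x ∈ c B`; by α such a `B` exists iff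
`x ∈ c A`, so `x ∈ c A` iff more than `d`, i.e. more than `s k`, ballots endorse it.
-/

section Ballots

variable {X : Type*}

def ballot (r : X → X → Prop) (A : Set X) : Set X :=
  {a ∈ A | ∀ b ∈ A, ¬ r b a}

lemma freelyRat_ballot (r : X → X → Prop) : FreelyRat (ballot r) :=
  ⟨r, fun _ => rfl⟩

@[simp]
lemma ballot_bot (A : Set X) : ballot ⊥ A = A := by
  ext a
  simp [ballot]

@[simp]
lemma ballot_top (A : Set X) : ballot ⊤ A = ∅ := by
  ext a
  simp only [ballot, Set.mem_ofPred_eq, Set.mem_empty_iff_false, iff_false, not_and]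
  exact fun ha h => h a ha trivial

def endorseWithin (B : Set X) (y : X) : X → X → Prop :=
  fun b a => a = y → b ∉ B

lemma mem_ballot_endorseWithin {A B : Set X} {x y : X} (hx : x ∈ A) :
    x ∈ ballot (endorseWithin B y) A ↔ x = y ∧ A ⊆ B := by
  simp only [ballot, endorseWithin, Set.mem_ofPred_eq, Classical.not_imp, not_not]
  exact ⟨fun h => ⟨(h.2 x hx).1, fun b hb => (h.2 b hb).2⟩,
    fun h => ⟨hx, fun b hb => ⟨h.1, h.2 hb⟩⟩⟩

lemma FreelyRat.axiomAlpha {v : Set X → Set X} (hv : FreelyRat v) : AxiomAlpha v := by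
  obtain ⟨r, hr⟩ := hv
  intro A B x hAB hxA hxB
  rw [hr] at hxB ⊢
  exact ⟨hxA, fun b hb => hxB.2 b (hAB hb)⟩

lemma AxiomAlpha.exists_superset_iff {c : Set X → Set X} (hc : AxiomAlpha c)
    {A : Set X} {x : X} (hx : x ∈ A) : (∃ B, A ⊆ B ∧ x ∈ c B) ↔ x ∈ c A :=
  ⟨fun ⟨_, hAB, hxB⟩ => hc hAB hx hxB, fun h => ⟨A, subset_rfl, h⟩⟩

end Ballots

lemma floor_mul_lt_iff_lt_div {s : ℝ} (hs : 0 ≤ s) {k : ℕ} (hk : 0 < k) (n : ℕ) :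
    ⌊s * k⌋₊ < n ↔ s < n / k := by
  rw [Nat.floor_lt (by positivity), lt_div_iff₀ (by exact_mod_cast hk)]

lemma exists_floor_mul_eq {s : ℝ} (hs0 : 0 ≤ s) (hs1 : s < 1) (m : ℕ) :
    ∃ d r : ℕ, ⌊s * (d + m + r + 1 : ℕ)⌋₊ = d := by
  obtain ⟨k, hk⟩ := exists_nat_ge ((m + 1) / (1 - s))
  rw [div_le_iff₀ (by linarith)] at hk
  have hd : (⌊s * k⌋₊ : ℝ) ≤ s * k := Nat.floor_le (by positivity)
  have hdk : ⌊s * k⌋₊ + m + 1 ≤ k := by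
    have : ((⌊s * k⌋₊ + m + 1 : ℕ) : ℝ) ≤ k := by push_cast; linarith
    exact_mod_cast this
  refine ⟨⌊s * k⌋₊, k - (⌊s * k⌋₊ + m + 1), ?_⟩
  rw [show ⌊s * k⌋₊ + m + (k - (⌊s * k⌋₊ + m + 1)) + 1 = k by omega]

section Majority

variable {X : Type*} {s : ℝ} {c : Set X → Set X}

lemma Majoritarian.of_finite {ι : Type*} [Finite ι] [Nonempty ι]
    (v : ι → Set X → Set X) (hv : ∀ i, FreelyRat (v i))
    (hc : ∀ A : Set X, ∀ x ∈ A,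
      (x ∈ c A ↔ (Nat.card {i // x ∈ v i A} : ℝ) / Nat.card ι > s)) :
    Majoritarian s c := by
  let e := Finite.equivFin ι
  refine ⟨Nat.card ι, v ∘ e.symm, Nat.card_pos, fun i => hv _, fun A x hx => ?_⟩
  have hcard : Nat.card {i // x ∈ v (e.symm i) A} = Nat.card {i // x ∈ v i A} :=
    Nat.card_congr (e.symm.subtypeEquiv fun _ => Iff.rfl)
  rw [hc A x hx, Function.comp_def, hcard]

lemma Majoritarian.axiomAlpha (h : Majoritarian s c) : AxiomAlpha c := by
  obtain ⟨k, v, hk, hv, hc⟩ := h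
  intro A B x hAB hxA hxB
  rw [hc B x (hAB hxA)] at hxB
  rw [hc A x hxA]
  have hmono : Nat.card {i // x ∈ v i B} ≤ Nat.card {i // x ∈ v i A} :=
    Nat.card_mono (Set.toFinite _) fun i hi => (hv i).axiomAlpha hAB hxA hi
  exact hxB.trans_le (by gcongr)

theorem AxiomAlpha.majoritarian [Finite X] (hc : AxiomAlpha c) (hs0 : 0 ≤ s) (hs1 : s < 1) :
    Majoritarian s c := by
  let P := {p : Set X × X // p.2 ∈ c p.1}
  obtain ⟨d, r, hd⟩ := exists_floor_mul_eq hs0 hs1 (Nat.card P)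
  let rel : Fin d ⊕ P ⊕ Fin (r + 1) → X → X → Prop :=
    Sum.elim (fun _ => ⊥) (Sum.elim (fun p => endorseWithin p.1.1 p.1.2) fun _ => ⊤)
  refine Majoritarian.of_finite (fun i => ballot (rel i)) (fun i => freelyRat_ballot _)
    fun A x hx => ?_
  have hcount : Nat.card {i // x ∈ ballot (rel i) A} =
      d + Nat.card {p : P // x = p.1.2 ∧ A ⊆ p.1.1} := by
    rw [Nat.card_congr Equiv.subtypeSum, Nat.card_sum, Nat.card_congr Equiv.subtypeSum,
      Nat.card_sum]
    simp [rel, hx, mem_ballot_endorseWithin hx]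
  have hwitness : 0 < Nat.card {p : P // x = p.1.2 ∧ A ⊆ p.1.1} ↔ x ∈ c A := by
    rw [Finite.card_pos_iff, ← hc.exists_superset_iff hx]
    simp [P, and_comm]
  have hk : Nat.card (Fin d ⊕ P ⊕ Fin (r + 1)) = d + Nat.card P + r + 1 := by
    simp only [Nat.card_sum, Nat.card_eq_fintype_card, Fintype.card_fin]
    omega
  rw [hk, gt_iff_lt, ← floor_mul_lt_iff_lt_div hs0 (by omega), hd, hcount, ← hwitness]
  omega

end Majority

theorem stmt9_general {X : Type*} [Fintype X] (c : Set X → Set X) :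
    (AxiomAlpha c ↔ ∃ s : ℝ, 0 ≤ s ∧ s < 1 ∧ Majoritarian s c) ∧
    (AxiomAlpha c ↔ ∀ s : ℝ, 0 ≤ s → s < 1 → Majoritarian s c) := by
  have hmaj (hc : AxiomAlpha c) (s : ℝ) (hs0 : 0 ≤ s) (hs1 : s < 1) : Majoritarian s c :=
    hc.majoritarian hs0 hs1
  exact ⟨⟨fun hc => ⟨0, le_rfl, one_pos, hmaj hc 0 le_rfl one_pos⟩,
      fun ⟨_, _, _, h⟩ => h.axiomAlpha⟩,
    ⟨hmaj, fun h => (h 0 le_rfl one_pos).axiomAlpha⟩⟩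

theorem stmt9 {X : Type*} [Fintype X] (c : Set X → Set X) (hq : IsQuasiChoice c) :
    (AxiomAlpha c ↔ ∃ s : ℝ, 0 ≤ s ∧ s < 1 ∧ Majoritarian s c) ∧
    (AxiomAlpha c ↔ ∀ s : ℝ, 0 ≤ s → s < 1 → Majoritarian s c) :=
  stmt9_general c
end

section
/- Let n ≥ 1, 1 ≤ k ≤ n+1, and c_{n,k} the choice over X_n = {0,…,n} with c_{n,k}(A) = A ∖ {0} if 0 ∈ A and |A| > k, else c_{n,k}(A) = A. Then the liberal number of c_{n,k} equals the binomial coefficient C(n, k−1): the family of ballots {v_A : A ⊆ X_n, 0 ∈ A, |A| = k}, with v_A(B) = B if B ⊆ A and v_A(B) = B ∖ {0} otherwise, is a liberal representation of size C(n,k−1), and no smaller liberal representation exists. -/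
open Classical in
/-- The choice `c_{n,k}` over `{0,…,n}`: it removes `0` from menus containing `0` of
size strictly larger than `k`, and is neutral otherwise. -/
noncomputable def cnk (n k : ℕ) : Set (Fin (n + 1)) → Set (Fin (n + 1)) := fun A =>
  if (0 : Fin (n + 1)) ∈ A ∧ k < A.ncard then A \ {0} else A

/-!
A ballot satisfies Axiom γ, so a ballot endorsing `0` in two distinct `k`-menus containing `0`
also endorses it in their union, a menu of size `> k` from which `c_{n,k}` removes `0`. Hence in a
liberal representation the `C(n, k-1)` such menus need pairwise distinct endorsing ballots.
Conversely the ballot attached to such a menu `A` keeps `0` exactly on the submenus of `A`, and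
every menu of size `≤ k` containing `0` lies in one of them.
-/

open Finset

theorem FreelyRat.axiomGamma {X : Type*} {c : Set X → Set X} (h : FreelyRat c) :
    AxiomGamma c := by
  obtain ⟨r, hr⟩ := h
  intro A B x hA hB
  rw [hr] at hA hB ⊢
  exact ⟨Or.inl hA.1, fun b hb => hb.elim (hA.2 b) (hB.2 b)⟩

theorem lib_le_card {X ι : Type*} [Fintype ι] [Nonempty ι] {c : Set X → Set X}
    (w : ι → Set X → Set X) (hw : ∀ i, FreelyRat (w i))
    (hc : ∀ A : Set X, ∀ x ∈ A, x ∈ c A ↔ ∃ i, x ∈ w i A) :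
    lib c ≤ Fintype.card ι := by
  let e := (Fintype.equivFin ι).symm
  exact sInf_le ⟨_, w ∘ e, Fintype.card_pos, ⟨fun i => hw (e i),
    fun A x hx => (hc A x hx).trans e.surjective.exists⟩, rfl⟩

theorem card_le_lib {X ι : Type*} [Fintype ι] {c : Set X → Set X} {a : X} (A : ι → Set X)
    (ha : ∀ i, a ∈ A i) (hc : ∀ i, a ∈ c (A i)) (hc_union : ∀ i j, i ≠ j → a ∉ c (A i ∪ A j)) :
    (Fintype.card ι : ℕ∞) ≤ lib c := by
  refine le_sInf ?_
  rintro _ ⟨p, v, -, ⟨hv, hrep⟩, rfl⟩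
  choose f hf using fun i => (hrep (A i) a (ha i)).1 (hc i)
  have hf_inj : Function.Injective f := by
    intro i j hij
    by_contra hne
    exact hc_union i j hne
      ((hrep _ a (Or.inl (ha i))).2 ⟨f i, (hv (f i)).axiomGamma (hf i) (hij ▸ hf j)⟩)
  simpa using Fintype.card_le_of_injective f hf_inj

theorem Finset.lt_card_union_of_ne {α : Type*} [DecidableEq α] {s t : Finset α} {k : ℕ}
    (hs : #s = k) (ht : #t = k) (hst : s ≠ t) : k < #(s ∪ t) := by
  rw [← hs]
  refine card_lt_card (subset_union_left.ssubset_of_ne fun h => hst ?_)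
  exact (eq_of_subset_of_card_le (union_eq_left.1 h.symm) (by rw [hs, ht])).symm

section PointedSubsets

variable {α : Type*} [Fintype α] [DecidableEq α]

def pointedSubsets (a : α) (k : ℕ) : Finset (Finset α) :=
  {A | a ∈ A ∧ #A = k}

@[simp]
theorem mem_pointedSubsets {a : α} {k : ℕ} {A : Finset α} :
    A ∈ pointedSubsets a k ↔ a ∈ A ∧ #A = k := by
  simp [pointedSubsets]

theorem card_pointedSubsets (a : α) {k : ℕ} (hk : 1 ≤ k) :
    #(pointedSubsets a k) = (Fintype.card α - 1).choose (k - 1) := by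
  have h : pointedSubsets a k = {A ∈ (univ : Finset α).powersetCard k | {a} ⊆ A} := by
    ext A
    simp [and_comm]
  rw [h, card_filter_powersetCard_subset _ _ _ (subset_univ _) (by simpa using hk)]
  simp

theorem exists_pointedSubsets_superset_iff {a : α} {k : ℕ} {B : Set α} (ha : a ∈ B)
    (hk : k ≤ Fintype.card α) :
    (∃ A ∈ pointedSubsets a k, B ⊆ A) ↔ B.ncard ≤ k := by
  constructor
  · rintro ⟨A, hA, hBA⟩
    calc B.ncard ≤ (A : Set α).ncard := Set.ncard_le_ncard hBA
      _ = k := by rw [Set.ncard_coe_finset, (mem_pointedSubsets.1 hA).2]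
  · intro hB
    rw [Set.ncard_eq_toFinset_card B B.toFinite] at hB
    obtain ⟨A, hBA, hA⟩ := exists_superset_card_eq hB hk
    exact ⟨A, mem_pointedSubsets.2 ⟨hBA (by simpa using ha), hA⟩,
      fun x hx => hBA (by simpa using hx)⟩

theorem pointedSubsets_nonempty (a : α) {k : ℕ} (hk1 : 1 ≤ k) (hk2 : k ≤ Fintype.card α) :
    (pointedSubsets a k).Nonempty := by
  obtain ⟨A, hA, -⟩ :=
    (exists_pointedSubsets_superset_iff (Set.mem_singleton a) hk2).2 (by simpa using hk1)
  exact ⟨A, hA⟩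

end PointedSubsets

open Classical in
noncomputable def subsetBallot {X : Type*} (A : Set X) (a : X) : Set X → Set X :=
  fun B => if B ⊆ A then B else B \ {a}

theorem mem_subsetBallot {X : Type*} {A B : Set X} {a x : X} :
    x ∈ subsetBallot A a B ↔ x ∈ B ∧ (x = a → B ⊆ A) := by
  unfold subsetBallot
  split_ifs with h <;> simp [h]

theorem freelyRat_subsetBallot {X : Type*} (A : Set X) (a : X) :
    FreelyRat (subsetBallot A a) := by
  refine ⟨fun b x => x = a ∧ b ∉ A, fun B => ?_⟩
  ext x
  simp only [mem_subsetBallot, Set.subset_def]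
  grind

theorem mem_cnk {n k : ℕ} {A : Set (Fin (n + 1))} {x : Fin (n + 1)} :
    x ∈ cnk n k A ↔ x ∈ A ∧ (x = 0 → A.ncard ≤ k) := by
  unfold cnk
  split_ifs <;> grind

theorem mem_cnk_iff_exists_subsetBallot {n k : ℕ} (hk1 : 1 ≤ k) (hk2 : k ≤ n + 1)
    {B : Set (Fin (n + 1))} {x : Fin (n + 1)} (hx : x ∈ B) :
    x ∈ cnk n k B ↔
      ∃ A : pointedSubsets (0 : Fin (n + 1)) k, x ∈ subsetBallot (A.1 : Set (Fin (n + 1))) 0 B := by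
  simp only [mem_cnk, mem_subsetBallot, hx, true_and, Subtype.exists, exists_prop]
  by_cases hx0 : x = 0
  · subst hx0
    simpa using (exists_pointedSubsets_superset_iff hx (by simpa using hk2)).symm
  · obtain ⟨A, hA⟩ := pointedSubsets_nonempty (0 : Fin (n + 1)) hk1 (by simpa using hk2)
    exact ⟨fun _ => ⟨A, hA, fun h => absurd h hx0⟩, fun _ h => absurd h hx0⟩

theorem zero_mem_cnk_of_mem_pointedSubsets {n k : ℕ} {A : Finset (Fin (n + 1))}
    (hA : A ∈ pointedSubsets 0 k) : (0 : Fin (n + 1)) ∈ cnk n k A := by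
  rw [mem_pointedSubsets] at hA
  exact mem_cnk.2 ⟨hA.1, fun _ => by rw [Set.ncard_coe_finset, hA.2]⟩

theorem zero_notMem_cnk_union_of_ne {n k : ℕ} {A A' : Finset (Fin (n + 1))}
    (hA : A ∈ pointedSubsets 0 k) (hA' : A' ∈ pointedSubsets 0 k) (hne : A ≠ A') :
    (0 : Fin (n + 1)) ∉ cnk n k (A ∪ A' : Set (Fin (n + 1))) := by
  have hlt := lt_card_union_of_ne (mem_pointedSubsets.1 hA).2 (mem_pointedSubsets.1 hA').2 hne
  rw [mem_cnk, ← coe_union, Set.ncard_coe_finset]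
  exact fun h => (h.2 rfl).not_gt hlt

theorem stmt17_general (n k : ℕ) (hk1 : 1 ≤ k) (hk2 : k ≤ n + 1) :
    lib (cnk n k) = ((n.choose (k - 1) : ℕ) : ℕ∞) := by
  have hcard : Fintype.card (pointedSubsets (0 : Fin (n + 1)) k) = n.choose (k - 1) := by
    rw [Fintype.card_coe, card_pointedSubsets 0 hk1, Fintype.card_fin, Nat.add_sub_cancel]
  have : Nonempty (pointedSubsets (0 : Fin (n + 1)) k) :=
    (pointedSubsets_nonempty 0 hk1 (by simpa using hk2)).to_subtype
  rw [← hcard]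
  refine le_antisymm ?_ ?_
  · exact lib_le_card _ (fun A => freelyRat_subsetBallot _ 0)
      fun B x hx => mem_cnk_iff_exists_subsetBallot hk1 hk2 hx
  · exact card_le_lib (a := 0) (fun A => (A.1 : Set (Fin (n + 1))))
      (fun A => (mem_pointedSubsets.1 A.2).1) (fun A => zero_mem_cnk_of_mem_pointedSubsets A.2)
      fun A A' hne => zero_notMem_cnk_union_of_ne A.2 A'.2 (Subtype.coe_injective.ne hne)

theorem stmt17 (n k : ℕ) (hn : 1 ≤ n) (hk1 : 1 ≤ k) (hk2 : k ≤ n + 1) :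
    lib (cnk n k) = ((n.choose (k - 1) : ℕ) : ℕ∞) :=
  stmt17_general n k hk1 hk2
end

section
/- Let n ≥ 1 and n/2 < k ≤ n+1, and c_{n,k} the choice over X_n = {0,…,n} with c_{n,k}(A) = A ∖ {0} if 0 ∈ A and |A| > k, else c_{n,k}(A) = A. Then dem(c_{n,k}) ≤ 2k − 1: the family consisting of the n ballots ṽ_i (where ṽ_i(A) = A ∖ {0} if {0,i} ⊆ A and ṽ_i(A) = A otherwise, for i = 1,…,n) together with 2k−n−1 copies of the neutral ballot is a democratic representation of c_{n,k} of size 2k−1. -/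
/-!
Take the ballots rationalized by "item `i` beats `0`" for `i = 1, …, n`, padded to
`m = 2k - 1` ballots by neutral ones. Every ballot endorses every nonzero item, while `0` is
rejected at `A` exactly by the ballots whose item lies in `A`; so `0` gets `m - (|A| - 1)`
votes, a strict majority exactly when `|A| ≤ k`.
-/

section Ballots

variable {X : Type*}

def maxChoice (r : X → X → Prop) (A : Set X) : Set X :=
  {a ∈ A | ∀ b ∈ A, ¬ r b a}

theorem freelyRat_maxChoice (r : X → X → Prop) : FreelyRat (maxChoice r) :=
  ⟨r, fun _ => rfl⟩

theorem isDemRep_maxChoice_iff {c : Set X → Set X} {m : ℕ} {r : Fin m → X → X → Prop} :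
    IsDemRep c (fun i => maxChoice (r i)) ↔
      ∀ A : Set X, ∀ x ∈ A, (x ∈ c A ↔ 2 * Nat.card {i : Fin m // ∀ b ∈ A, ¬ r i b x} > m) := by
  simp only [IsDemRep, freelyRat_maxChoice, implies_true, true_and, maxChoice, Set.mem_ofPred_eq]
  exact forall₂_congr fun A x => imp_congr_right fun hx => by simp only [hx, true_and]

theorem dem_le_of_isDemRep {c : Set X → Set X} {m : ℕ} (hm : 0 < m) {v : Fin m → Set X → Set X}
    (h : IsDemRep c v) : dem c ≤ m :=
  sInf_le ⟨m, v, hm, h, rfl⟩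

end Ballots

section Cnk

variable {n k m : ℕ} {A : Set (Fin (n + 1))}

theorem zero_mem_cnk_iff (h0 : 0 ∈ A) : 0 ∈ cnk n k A ↔ A.ncard ≤ k := by
  by_cases h : k < A.ncard
  · simp [cnk, h0, h]
  · simp [cnk, h0, h, not_lt.1 h]

theorem mem_cnk_of_ne_zero {x : Fin (n + 1)} (hx : x ∈ A) (hx0 : x ≠ 0) : x ∈ cnk n k A := by
  unfold cnk
  split_ifs
  exacts [⟨hx, hx0⟩, hx]

/-- The relation of the ballot `ṽ_{i+1}`. Indices `i ≥ n` name no item, so they give neutral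
ballots. -/
def beatsZero (i : Fin m) (b a : Fin (n + 1)) : Prop :=
  (b : ℕ) = i + 1 ∧ a = 0

theorem card_unbeaten_of_ne_zero {x : Fin (n + 1)} (hx0 : x ≠ 0) :
    Nat.card {i : Fin m // ∀ b ∈ A, ¬ beatsZero i b x} = m := by
  simp [beatsZero, hx0]

theorem card_index_mem (hnm : n ≤ m) (h0 : 0 ∈ A) :
    Nat.card {i : Fin m // ∃ b ∈ A, (b : ℕ) = i + 1} = A.ncard - 1 := by
  rw [← Set.ncard_sdiff_singleton_of_mem h0, ← Nat.card_coe_set_eq]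
  symm
  have hpos (b : ↥(A \ {0})) : 0 < (b.1 : ℕ) :=
    Nat.pos_of_ne_zero (Fin.val_ne_zero_iff.2 b.2.2)
  refine Nat.card_eq_of_bijective
    (fun b => ⟨⟨b.1 - 1, by have := b.1.isLt; have := hpos b; omega⟩, b.1, b.2.1, ?_⟩)
    ⟨?injective, ?surjective⟩
  · have := hpos b
    simp only
    omega
  case injective =>
    intro b c hbc
    have hval := congrArg (fun i => (i.1 : ℕ)) hbc
    have := hpos b
    have := hpos c
    simp only at hval
    exact Subtype.ext (Fin.ext (by omega))
  case surjective =>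
    rintro ⟨i, b, hb, hbi⟩
    have hb0 : b ≠ 0 := by
      rintro rfl
      simp at hbi
    exact ⟨⟨b, hb, hb0⟩, Subtype.ext (Fin.ext (by simp only; omega))⟩

theorem card_unbeaten_zero (hnm : n ≤ m) (h0 : 0 ∈ A) :
    Nat.card {i : Fin m // ∀ b ∈ A, ¬ beatsZero i b 0} = m - (A.ncard - 1) := by
  have hunbeaten (i : Fin m) :
      (∀ b ∈ A, ¬ beatsZero i b 0) ↔ ¬ ∃ b ∈ A, (b : ℕ) = i + 1 := by
    simp [beatsZero]
  classical
  rw [← card_index_mem hnm h0, Nat.card_congr (Equiv.subtypeEquivRight hunbeaten)]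
  simp only [Nat.card_eq_fintype_card, Fintype.card_subtype_compl, Fintype.card_fin]

end Cnk

theorem stmt18_general (n k : ℕ) (hk1 : n < 2 * k) :
    dem (cnk n k) ≤ ((2 * k - 1 : ℕ) : ℕ∞) := by
  refine dem_le_of_isDemRep (v := fun i => maxChoice (beatsZero i)) (by omega)
    (isDemRep_maxChoice_iff.2 fun A x hx => ?_)
  rcases eq_or_ne x 0 with rfl | hx0
  · have hA : A.ncard ≤ n + 1 := by simpa using Set.ncard_le_card A
    rw [zero_mem_cnk_iff hx, card_unbeaten_zero (by omega) hx]
    omega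
  · rw [card_unbeaten_of_ne_zero hx0]
    exact iff_of_true (mem_cnk_of_ne_zero hx hx0) (by omega)

theorem stmt18 (n k : ℕ) (hn : 1 ≤ n) (hk1 : n < 2 * k) (hk2 : k ≤ n + 1) :
    dem (cnk n k) ≤ ((2 * k - 1 : ℕ) : ℕ∞) :=
  stmt18_general n k hk1
end

section
/- For any quasi-choice correspondence c over a grand set X of size n ≥ 2 satisfying Axiom α, the liberal number satisfies lib(c) ≤ C(n−1, ⌊(n−1)/2⌋), and this bound is tight: the choice c_{n−1, ⌊(n−1)/2⌋+1} over an n-element set attains it. -/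
/-!
Under axiom α, an item `x` is chosen from a menu `A ∋ x` exactly when `A` lies inside a maximal
menu from which `x` is chosen. Treating these maximal menus as ceilings, ballot `i` endorses `a`
at `A` when `A` fits under the `i`-th ceiling of `a`; the union of these ballots is `c`. The
maximal menus at `x` form an antichain of sets containing `x`, so Sperner's theorem on the other
`n - 1` items bounds their number, hence the number of ballots, by `C(n - 1, ⌊(n - 1)/2⌋)`.

For tightness: a ballot satisfies axiom γ, and in `c_{m, t+1}` the item `0` is chosen from every
menu of size `t + 1` containing it but from no union of two of them, so these `C(m, t)` menus
need pairwise distinct ballots.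
-/

open Finset

section Sperner

variable {α : Type*} [Fintype α] [DecidableEq α]

theorem IsAntichain.card_le_choose_of_forall_mem {𝒜 : Finset (Finset α)}
    (h𝒜 : IsAntichain (· ⊆ ·) (𝒜 : Set (Finset α))) {x : α} (hx : ∀ s ∈ 𝒜, x ∈ s) :
    #𝒜 ≤ (Fintype.card α - 1).choose ((Fintype.card α - 1) / 2) := by
  let f : Finset α → Finset {y : α // y ≠ x} := fun s => s.subtype (· ≠ x)
  have subset_of_f_subset : ∀ s t, x ∈ t → f s ⊆ f t → s ⊆ t := by
    intro s t hxt hst a ha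
    by_cases hax : a = x
    · exact hax ▸ hxt
    · simpa [f] using hst (mem_subtype.2 ha : (⟨a, hax⟩ : {y // y ≠ x}) ∈ f s)
  have hinj : Set.InjOn f 𝒜 := fun s hs t ht hst =>
    (subset_of_f_subset s t (hx t ht) hst.le).antisymm (subset_of_f_subset t s (hx s hs) hst.ge)
  have hanti : IsAntichain (· ⊆ ·) ((𝒜.image f : Finset _) : Set (Finset {y : α // y ≠ x})) := by
    simp only [coe_image]
    rintro _ ⟨s, hs, rfl⟩ _ ⟨t, ht, rfl⟩ hne hst
    exact hne (congrArg f (h𝒜.eq hs ht (subset_of_f_subset s t (hx t ht) hst)))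
  simpa [card_image_of_injOn hinj] using hanti.sperner

end Sperner

section Ceilings

variable {X : Type*}

def ceilingBallot (C : X → Set X) : Set X → Set X := fun A => {a ∈ A | A ⊆ C a}

theorem freelyRat_ceilingBallot (C : X → Set X) : FreelyRat (ceilingBallot C) :=
  ⟨fun b a => b ∉ C a, fun A => by simp [ceilingBallot, Set.subset_def]⟩

theorem Finset.exists_fin_enum_of_card_le {β : Type*} (s : Finset β) (d : β) {k : ℕ}
    (hk : #s ≤ k) : ∃ g : Fin k → β, (∀ i, g i ∈ s ∨ g i = d) ∧ ∀ b ∈ s, ∃ i, g i = b := by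
  refine ⟨fun i => s.toList.getD i d, fun i => ?_, fun b hb => ?_⟩ <;> dsimp only
  · by_cases hi : (i : ℕ) < s.toList.length
    · rw [List.getD_eq_getElem _ _ hi]
      exact .inl (mem_toList.1 (List.getElem_mem hi))
    · exact .inr (List.getD_eq_default _ _ (not_lt.1 hi))
  · obtain ⟨i, hi, rfl⟩ := List.mem_iff_getElem.1 (Finset.mem_toList.2 hb)
    exact ⟨⟨i, hi.trans_le (by simpa using hk)⟩, List.getD_eq_getElem _ _ hi⟩

theorem exists_isLiberalRep_of_ceilings {c : Set X → Set X} {k : ℕ}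
    (F : X → Finset (Set X)) (hF : ∀ x, #(F x) ≤ k)
    (hc : ∀ A, ∀ x ∈ A, x ∈ c A ↔ ∃ M ∈ F x, A ⊆ M) :
    ∃ v : Fin k → Set X → Set X, IsLiberalRep c v := by
  choose g hg_mem hg_surj using fun x => (F x).exists_fin_enum_of_card_le ∅ (hF x)
  refine ⟨fun i => ceilingBallot (fun a => g a i), fun i => freelyRat_ceilingBallot _,
    fun A x hx => ?_⟩
  simp only [hc A x hx, ceilingBallot, Set.mem_ofPred_eq, hx, true_and]
  constructor
  · rintro ⟨M, hM, hAM⟩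
    obtain ⟨i, rfl⟩ := hg_surj x M hM
    exact ⟨i, hAM⟩
  · rintro ⟨i, hAg⟩
    rcases hg_mem x i with hi | hi
    · exact ⟨g x i, hi, hAg⟩
    · exact absurd (hAg hx) (by simp [hi])

end Ceilings

section MaximalMenus

variable {X : Type*} [Fintype X] {c : Set X → Set X}

open Classical in
noncomputable def maximalMenus (c : Set X → Set X) (x : X) : Finset (Finset X) :=
  {M | Maximal (fun M : Finset X => x ∈ c M) M}

theorem mem_maximalMenus {x : X} {M : Finset X} :
    M ∈ maximalMenus c x ↔ Maximal (fun M : Finset X => x ∈ c M) M := by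
  simp [maximalMenus]

theorem isAntichain_maximalMenus (x : X) :
    IsAntichain (· ⊆ ·) (maximalMenus c x : Set (Finset X)) := by
  convert setOfPred_maximal_antichain (fun M : Finset X => x ∈ c M)
  ext M
  exact mem_maximalMenus

theorem AxiomAlpha.mem_iff_exists_maximalMenus (ha : AxiomAlpha c) {A : Set X} {x : X}
    (hx : x ∈ A) : x ∈ c A ↔ ∃ M ∈ maximalMenus c x, A ⊆ M := by
  classical
  constructor
  · intro hxA
    obtain ⟨M, hAM, hM⟩ :=
      Finite.exists_le_maximal (p := fun M : Finset X => x ∈ c M) (a := A.toFinset) (by simpa)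
    exact ⟨M, mem_maximalMenus.2 hM, by simpa using hAM⟩
  · rintro ⟨M, hM, hAM⟩
    exact ha hAM hx (mem_maximalMenus.1 hM).prop

theorem IsQuasiChoice.card_maximalMenus_le (hq : IsQuasiChoice c) (x : X) :
    #(maximalMenus c x) ≤ (Fintype.card X - 1).choose ((Fintype.card X - 1) / 2) := by
  classical
  exact (isAntichain_maximalMenus x).card_le_choose_of_forall_mem
    fun M hM => hq _ (mem_maximalMenus.1 hM).prop

theorem exists_isLiberalRep_of_axiomAlpha (hq : IsQuasiChoice c) (ha : AxiomAlpha c) :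
    ∃ v : Fin ((Fintype.card X - 1).choose ((Fintype.card X - 1) / 2)) → Set X → Set X,
      IsLiberalRep c v := by
  classical
  refine exists_isLiberalRep_of_ceilings (fun x => (maximalMenus c x).image (↑))
    (fun x => card_image_le.trans (hq.card_maximalMenus_le x)) fun A x hx => ?_
  simp [ha.mem_iff_exists_maximalMenus hx]

end MaximalMenus

section LowerBound

variable {X : Type*}

theorem FreelyRat.axiomGamma_s19 {v : Set X → Set X} (hv : FreelyRat v) : AxiomGamma v := by
  obtain ⟨r, hr⟩ := hv
  intro A B x hA hB
  rw [hr] at hA hB ⊢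
  exact ⟨.inl hA.1, fun b hb => hb.elim (hA.2 b) (hB.2 b)⟩

theorem IsLiberalRep.card_le {c : Set X → Set X} {k : ℕ} {v : Fin k → Set X → Set X}
    (hv : IsLiberalRep c v) {x : X} {𝒮 : Finset (Set X)} (hx : ∀ A ∈ 𝒮, x ∈ A)
    (hchosen : ∀ A ∈ 𝒮, x ∈ c A) (hunion : ∀ A ∈ 𝒮, ∀ B ∈ 𝒮, A ≠ B → x ∉ c (A ∪ B)) :
    #𝒮 ≤ k := by
  have hballot (A : 𝒮) : ∃ i, x ∈ v i A := (hv.2 A x (hx A A.2)).1 (hchosen A A.2)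
  choose i hi using hballot
  have hinj : Function.Injective i := fun A B hAB => by
    by_contra hne
    refine hunion A A.2 B B.2 (Subtype.coe_ne_coe.2 hne)
      ((hv.2 _ x (.inl (hx A A.2))).2 ⟨i A, ?_⟩)
    exact (hv.1 (i A)).axiomGamma_s19 (hi A) (hAB ▸ hi B)
  simpa using Fintype.card_le_of_injective i hinj

end LowerBound

section Cnk

variable {m t : ℕ}

theorem isQuasiChoice_cnk : IsQuasiChoice (cnk m t) := by
  intro A
  unfold cnk
  split_ifs
  exacts [Set.sdiff_subset, subset_rfl]

theorem axiomAlpha_cnk : AxiomAlpha (cnk m t) := by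
  intro A B x hAB hxA hxB
  unfold cnk at hxB ⊢
  split_ifs at hxB ⊢ with hA hB hB
  · exact ⟨hxA, hxB.2⟩
  · exact absurd ⟨hAB hA.1, hA.2.trans_le (Set.ncard_le_ncard hAB)⟩ hB
  all_goals exact hxA

theorem zero_mem_cnk_iff_s19 {A : Set (Fin (m + 1))} : 0 ∈ cnk m t A ↔ 0 ∈ A ∧ A.ncard ≤ t := by
  unfold cnk
  split_ifs with h
  · simpa using fun _ => h.2
  · simp only [not_and, not_lt] at h
    exact ⟨fun h0 => ⟨h0, h h0⟩, And.left⟩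

theorem IsLiberalRep.choose_le_of_cnk {k : ℕ}
    {v : Fin k → Set (Fin (m + 1)) → Set (Fin (m + 1))} (hv : IsLiberalRep (cnk m (t + 1)) v) :
    m.choose t ≤ k := by
  classical
  let ℬ := (univ.erase (0 : Fin (m + 1))).powersetCard t
  let 𝒮 : Finset (Set (Fin (m + 1))) :=
    ℬ.image fun B => ((insert 0 B : Finset (Fin (m + 1))) : Set (Fin (m + 1)))
  have h0 : ∀ B ∈ ℬ, 0 ∉ B := fun B hB h => by simpa using (mem_powersetCard.1 hB).1 h
  have h𝒮 : ∀ A ∈ 𝒮, 0 ∈ A ∧ A.ncard = t + 1 := by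
    rintro _ hA
    obtain ⟨B, hB, rfl⟩ := mem_image.1 hA
    exact ⟨by simp, by
      rw [Set.ncard_coe_finset, card_insert_of_notMem (h0 B hB), (mem_powersetCard.1 hB).2]⟩
  have hcard : #𝒮 = m.choose t := by
    rw [card_image_of_injOn, card_powersetCard, card_erase_of_mem (mem_univ _), card_univ,
      Fintype.card_fin, Nat.add_sub_cancel]
    intro B hB B' hB' hBB'
    rw [← erase_insert (h0 B hB), ← erase_insert (h0 B' hB'), coe_inj.1 hBB']
  refine hcard ▸ hv.card_le (fun A hA => (h𝒮 A hA).1)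
    (fun A hA => zero_mem_cnk_iff_s19.2 ⟨(h𝒮 A hA).1, (h𝒮 A hA).2.le⟩) fun A hA B hB hAB h => ?_
  have hlt : A.ncard < (A ∪ B).ncard := by
    refine Set.ncard_lt_ncard (Set.subset_union_left.ssubset_of_ne fun hA_eq => hAB ?_)
    exact (Set.eq_of_subset_of_ncard_le (hA_eq ▸ Set.subset_union_right)
      (by rw [(h𝒮 A hA).2, (h𝒮 B hB).2])).symm
  exact (hlt.trans_le (zero_mem_cnk_iff_s19.1 h).2).ne (h𝒮 A hA).2

end Cnk

section LiberalNumber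

variable {X : Type*} {c : Set X → Set X}

theorem lib_le_of_isLiberalRep {k : ℕ} (hk : 0 < k) {v : Fin k → Set X → Set X}
    (hv : IsLiberalRep c v) : lib c ≤ k :=
  sInf_le ⟨k, v, hk, hv, rfl⟩

theorem le_lib_of_forall_isLiberalRep {N : ℕ}
    (h : ∀ k (v : Fin k → Set X → Set X), IsLiberalRep c v → N ≤ k) : N ≤ lib c :=
  le_sInf fun _ ⟨k, v, _, hv, hk⟩ => hk ▸ Nat.cast_le.2 (h k v hv)

theorem lib_le_choose_of_axiomAlpha [Fintype X] (hq : IsQuasiChoice c) (ha : AxiomAlpha c) :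
    lib c ≤ (Fintype.card X - 1).choose ((Fintype.card X - 1) / 2) :=
  have ⟨_, hv⟩ := exists_isLiberalRep_of_axiomAlpha hq ha
  lib_le_of_isLiberalRep (Nat.choose_pos (Nat.div_le_self _ _)) hv

end LiberalNumber

theorem stmt19_general {X : Type*} [Fintype X] (n : ℕ) (hX : Fintype.card X = n)
    (c : Set X → Set X) (hq : IsQuasiChoice c) (ha : AxiomAlpha c) :
    lib c ≤ (((n - 1).choose ((n - 1) / 2) : ℕ) : ℕ∞) ∧
      (∀ m : ℕ, m + 1 = n →
        lib (cnk m (m / 2 + 1)) = (((n - 1).choose ((n - 1) / 2) : ℕ) : ℕ∞)) := by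
  refine ⟨hX ▸ lib_le_choose_of_axiomAlpha hq ha, ?_⟩
  rintro m rfl
  refine le_antisymm ?_ (le_lib_of_forall_isLiberalRep fun _ _ hv => hv.choose_le_of_cnk)
  simpa using
    lib_le_choose_of_axiomAlpha (c := cnk m (m / 2 + 1)) isQuasiChoice_cnk axiomAlpha_cnk

theorem stmt19 {X : Type*} [Fintype X] (n : ℕ) (hn : 2 ≤ n) (hX : Fintype.card X = n)
    (c : Set X → Set X) (hq : IsQuasiChoice c) (ha : AxiomAlpha c) :
    lib c ≤ (((n - 1).choose ((n - 1) / 2) : ℕ) : ℕ∞) ∧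
      (∀ m : ℕ, m + 1 = n →
        lib (cnk m (m / 2 + 1)) = (((n - 1).choose ((n - 1) / 2) : ℕ) : ℕ∞)) :=
  stmt19_general n hX c hq ha
end
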